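/- Let U be a (G,H)-biset, V an (H,K)-biset, (u,v) ∈ U × V, and L ≤ G. Then (Lᵘ)ᵛ = L^{[u,v]}, where for a subgroup L ≤ G and u ∈ U, Lᵘ := {h ∈ H | ∃ l ∈ L, (l,h) ∈ (G × H)_u}, and [u,v] denotes the class of (u,v) in U ×_H V. -/

import Mathlib

/-- For `L ≤ A` and `D ≤ A × B`, the subgroup `{b | ∃ l ∈ L, (l,b) ∈ D} ≤ B`;
for `D = (A × B)_w` the stabilizer of a point `w` of an `(A,B)`-biset, this is `Lʷ`. -/
def lstarSub {A B : Type*} [Group A] [Group B] (L : Subgroup A) (D : Subgroup (A × B)) :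
    Subgroup B where
  carrier := {b | ∃ l ∈ L, (l, b) ∈ D}
  one_mem' := ⟨1, L.one_mem, D.one_mem⟩
  mul_mem' := fun ⟨l, hl, hD⟩ ⟨l', hl', hD'⟩ =>
    ⟨l * l', L.mul_mem hl hl', D.mul_mem hD hD'⟩
  inv_mem' := fun ⟨l, hl, hD⟩ => ⟨l⁻¹, L.inv_mem hl, D.inv_mem hD⟩

section Tensor

variable (G H K : Type*) [Group G] [Group H] [Group K]
variable (U V : Type*) [MulAction (G × H) U] [MulAction (H × K) V]

/-- The setoid on `U × V` whose classes are the `H`-orbits for `h • (u,v) = (u h⁻¹, h v)`;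
bisets are encoded as `(G × H)`-sets via `(g,h) • u = g u h⁻¹`. -/
def tensorSetoid : Setoid (U × V) where
  r p q := ∃ h : H, p.1 = ((1, h) : G × H) • q.1 ∧ p.2 = ((h, 1) : H × K) • q.2
  iseqv := by
    constructor
    · intro p
      exact ⟨1, by simp [Prod.mk_one_one], by simp [Prod.mk_one_one]⟩
    · rintro p q ⟨h, h1, h2⟩
      refine ⟨h⁻¹, ?_, ?_⟩ <;>
        simp [h1, h2, smul_smul, Prod.mk_mul_mk, Prod.mk_one_one]
    · rintro p q r ⟨h, h1, h2⟩ ⟨h', h1', h2'⟩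
      refine ⟨h * h', ?_, ?_⟩ <;>
        simp [h1, h2, h1', h2', smul_smul, Prod.mk_mul_mk]

/-- The biset tensor product `U ×_H V`. -/
def Tensor : Type _ := Quotient (tensorSetoid G H K U V)

/-- The class `[u, v] ∈ U ×_H V`. -/
def tmk (p : U × V) : Tensor G H K U V := Quotient.mk (tensorSetoid G H K U V) p

/-- The `(G,K)`-biset structure on `U ×_H V`. -/
instance : MulAction (G × K) (Tensor G H K U V) where
  smul a := Quotient.map
    (fun p => (((a.1, 1) : G × H) • p.1, ((1, a.2) : H × K) • p.2))
    (by
      rintro p q ⟨h, h1, h2⟩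
      exact ⟨h, by simp [h1, smul_smul, Prod.mk_mul_mk],
        by simp [h2, smul_smul, Prod.mk_mul_mk]⟩)
  one_smul := by
    intro x
    induction x using Quotient.ind
    refine congrArg (Quotient.mk _) ?_
    simp [Prod.mk_one_one]
  mul_smul := by
    intro a b x
    induction x using Quotient.ind
    refine congrArg (Quotient.mk _) ?_
    simp [smul_smul, Prod.mk_mul_mk]

/-- Bouc's star product `D ∗ E` of `D ≤ A × B` and `E ≤ B × C`. -/
def starProd {A B C : Type*} [Group A] [Group B] [Group C]
    (D : Subgroup (A × B)) (E : Subgroup (B × C)) : Subgroup (A × C) where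
  carrier := {p | ∃ b, (p.1, b) ∈ D ∧ (b, p.2) ∈ E}
  one_mem' := ⟨1, D.one_mem, E.one_mem⟩
  mul_mem' := fun ⟨b, hD, hE⟩ ⟨b', hD', hE'⟩ => ⟨b * b', D.mul_mem hD hD', E.mul_mem hE hE'⟩
  inv_mem' := fun ⟨b, hD, hE⟩ => ⟨b⁻¹, D.inv_mem hD, E.inv_mem hE⟩

theorem mem_lstarSub {A B : Type*} [Group A] [Group B] {L : Subgroup A} {D : Subgroup (A × B)}
    {b : B} : b ∈ lstarSub L D ↔ ∃ l ∈ L, (l, b) ∈ D :=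
  Iff.rfl

theorem lstarSub_lstarSub {A B C : Type*} [Group A] [Group B] [Group C] (L : Subgroup A)
    (D : Subgroup (A × B)) (E : Subgroup (B × C)) :
    lstarSub (lstarSub L D) E = lstarSub L (starProd D E) := by
  ext c
  simp only [mem_lstarSub]
  exact ⟨fun ⟨b, ⟨l, hl, hD⟩, hE⟩ => ⟨l, hl, b, hD, hE⟩,
    fun ⟨l, hl, b, hD, hE⟩ => ⟨b, ⟨l, hl, hD⟩, hE⟩⟩

theorem smul_eq_smul_iff_inv_mul_smul_eq {M X : Type*} [Group M] [MulAction M X] {p q : M}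
    {x y : X} : p • x = q • y ↔ (q⁻¹ * p) • x = y := by
  rw [mul_smul, inv_smul_eq_iff]

variable {G H K U V} in
theorem tmk_eq_tmk_iff {p q : U × V} :
    tmk G H K U V p = tmk G H K U V q ↔
      ∃ h : H, p.1 = ((1, h) : G × H) • q.1 ∧ p.2 = ((h, 1) : H × K) • q.2 :=
  Quotient.eq

variable {G H K U V} in
theorem smul_tmk (g : G) (k : K) (u : U) (v : V) :
    ((g, k) : G × K) • tmk G H K U V (u, v) =
      tmk G H K U V (((g, 1) : G × H) • u, ((1, k) : H × K) • v) :=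
  rfl

theorem stabilizer_tmk (u : U) (v : V) :
    MulAction.stabilizer (G × K) (tmk G H K U V (u, v)) =
      starProd (MulAction.stabilizer (G × H) u) (MulAction.stabilizer (H × K) v) := by
  ext ⟨g, k⟩
  rw [MulAction.mem_stabilizer_iff, smul_tmk, tmk_eq_tmk_iff]
  simp only [smul_eq_smul_iff_inv_mul_smul_eq, Prod.inv_mk, Prod.mk_mul_mk, inv_one, mul_one,
    one_mul]
  exact inv_surjective.exists.trans (by simp only [inv_inv]; rfl)

theorem starL_starL (L : Subgroup G) (u : U) (v : V) :
    lstarSub (lstarSub L (MulAction.stabilizer (G × H) u)) (MulAction.stabilizer (H × K) v) =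
      lstarSub L (MulAction.stabilizer (G × K) (tmk G H K U V (u, v))) := by
  rw [stabilizer_tmk, lstarSub_lstarSub]

end Tensor
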